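/- arXiv:2108.07504 — 2 statements merged into one kernel-verified Lean document; each statement's English description precedes it below -/
import Mathlib

section
/- Let Z ≥ 0, V ≥ 0, c ≥ 0, β ≥ 1, a > 0 and b > 0 be real numbers. Then the function P ↦ (Z/β)·(c + b/ln(1 + a·P))^β + (1/(2β²))·(c + b/ln(1 + a·P))^(2β) + V·P is convex on (0, ∞). -/
/-!
The transmission time `P ↦ b / log (1 + a P)` is convex: `t ↦ b / t` is convex and antitone on `(0, ∞)`,
and `P ↦ log (1 + a P)` is concave and positive. Adding `c ≥ 0` keeps it convex and nonnegative,
and raising a nonnegative convex function to a power `p ≥ 1` keeps it convex because `t ↦ t ^ p`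
is convex and monotone on `[0, ∞)`. The objective is a nonnegative combination of two such powers
and the linear term `V P`.
-/

open Set Real

section

variable {E : Type*} [AddCommGroup E] [Module ℝ E] {s : Set E} {f : E → ℝ}

lemma ConvexOn.rpow {p : ℝ} (hf : ConvexOn ℝ s f) (hf₀ : ∀ x ∈ s, 0 ≤ f x) (hp : 1 ≤ p) :
    ConvexOn ℝ s fun x => f x ^ p := by
  refine ⟨hf.1, fun x hx y hy μ ν hμ hν hμν => ?_⟩
  calc f (μ • x + ν • y) ^ p ≤ (μ • f x + ν • f y) ^ p :=
        rpow_le_rpow (hf₀ _ (hf.1 hx hy hμ hν hμν)) (hf.2 hx hy hμ hν hμν) (by linarith)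
    _ ≤ μ • f x ^ p + ν • f y ^ p :=
        (convexOn_rpow hp).2 (hf₀ x hx) (hf₀ y hy) hμ hν hμν

lemma ConcaveOn.const_div {b : ℝ} (hf : ConcaveOn ℝ s f) (hf₀ : ∀ x ∈ s, 0 < f x) (hb : 0 ≤ b) :
    ConvexOn ℝ s fun x => b / f x := by
  have hdiv : ConvexOn ℝ (Ioi 0) fun t : ℝ => b / t := by
    simpa only [zpow_neg_one, smul_eq_mul, div_eq_mul_inv] using (convexOn_zpow (-1)).smul hb
  refine ⟨hf.1, fun x hx y hy μ ν hμ hν hμν => ?_⟩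
  have hmix : 0 < μ • f x + ν • f y := convex_Ioi (0 : ℝ) (hf₀ x hx) (hf₀ y hy) hμ hν hμν
  calc b / f (μ • x + ν • y) ≤ b / (μ • f x + ν • f y) :=
        div_le_div_of_nonneg_left hb hmix (hf.2 hx hy hμ hν hμν)
    _ ≤ μ • (b / f x) + ν • (b / f y) := hdiv.2 (hf₀ x hx) (hf₀ y hy) hμ hν hμν

end

lemma log_one_add_mul_pos {a P : ℝ} (ha : 0 < a) (hP : 0 < P) : 0 < log (1 + a * P) :=
  log_pos (by linarith [mul_pos ha hP])

lemma concaveOn_log_one_add_mul {a : ℝ} (ha : 0 ≤ a) :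
    ConcaveOn ℝ (Ici 0) fun P => log (1 + a * P) := by
  refine ⟨convex_Ici 0, fun x hx y hy μ ν hμ hν hμν => ?_⟩
  have hpos : ∀ P ∈ Ici (0 : ℝ), 0 < 1 + a * P := fun P hP => by
    linarith [mul_nonneg ha (mem_Ici.mp hP)]
  convert strictConcaveOn_log_Ioi.concaveOn.2 (hpos x hx) (hpos y hy) hμ hν hμν using 2
  simp only [smul_eq_mul]
  linear_combination -hμν

lemma convexOn_div_log_one_add_mul {a b : ℝ} (ha : 0 < a) (hb : 0 ≤ b) :
    ConvexOn ℝ (Ioi 0) fun P => b / log (1 + a * P) :=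
  ((concaveOn_log_one_add_mul ha.le).subset Ioi_subset_Ici_self (convex_Ioi 0)).const_div
    (fun _ hP => log_one_add_mul_pos ha hP) hb

theorem stmt_6 (Z V c β a b : ℝ) (hZ : 0 ≤ Z) (hV : 0 ≤ V) (hc : 0 ≤ c) (hβ : 1 ≤ β)
    (ha : 0 < a) (hb : 0 < b) :
    ConvexOn ℝ (Set.Ioi 0) (fun P : ℝ =>
      (Z/β) * (c + b / Real.log (1 + a*P)) ^ β
      + (1/(2*β^2)) * (c + b / Real.log (1 + a*P)) ^ (2*β)
      + V * P) := by
  have hT : ConvexOn ℝ (Ioi 0) fun P => c + b / log (1 + a * P) :=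
    (convexOn_const c (convex_Ioi 0)).add (convexOn_div_log_one_add_mul ha hb.le)
  have hT₀ : ∀ P ∈ Ioi (0 : ℝ), 0 ≤ c + b / log (1 + a * P) := fun _ hP =>
    add_nonneg hc (div_nonneg hb.le (log_one_add_mul_pos ha hP).le)
  have h₁ := (hT.rpow hT₀ hβ).smul (div_nonneg hZ (by linarith : (0 : ℝ) ≤ β))
  have h₂ := (hT.rpow hT₀ (by linarith : (1 : ℝ) ≤ 2 * β)).smul
    (by positivity : (0 : ℝ) ≤ 1 / (2 * β ^ 2))
  exact (h₁.add h₂).add ((convexOn_id (convex_Ioi 0)).smul hV)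
end

section
/- Let K, D, W, h, N₀, σ, ξ be positive real numbers, let ε' ∈ (0, 1), let x₀ ∈ ℝ, and let q ≤ q_th be real numbers. For P > 0 define T(P) = K·D / (W · log₂(1 + K·h·P/(W·N₀))), and set δ = q_th − q + exp((σ/ξ)·(1 − ε'^(−ξ)) − x₀). Then for every P > 0 satisfying q + T(P) − q_th > 0 and −ln(q + T(P) − q_th) − x₀ ≥ 0, the inequality (1 + (ξ/σ)·(−ln(q + T(P) − q_th) − x₀))^(−1/ξ) ≤ ε' holds if and only if P ≥ (W·N₀/(K·h))·(exp((K·D·ln 2/W)·(1/δ)) − 1). -/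
/-!
The constraint is a chain of monotone transformations of `P`: inverting the generalized Pareto
tail bounds the excess `-ln(q + T(P) - q_th) - x₀` from below, exponentiating turns this into
the deadline `T(P) ≤ δ`, and inverting Shannon's rate `log₂(1 + SNR)` turns that into `P ≥ P_min`.
-/

open Real

noncomputable def gpdTail (σ ξ y : ℝ) : ℝ := (1 + ξ / σ * y) ^ (-1 / ξ)

theorem gpdTail_le_iff {σ ξ ε y : ℝ} (hσ : 0 < σ) (hξ : 0 < ξ) (hε : 0 < ε) (hy : 0 ≤ y) :
    gpdTail σ ξ y ≤ ε ↔ σ / ξ * (ε ^ (-ξ) - 1) ≤ y := by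
  have hexp : -1 / ξ = (-ξ)⁻¹ := by rw [neg_div, one_div, inv_neg]
  rw [gpdTail, hexp, rpow_inv_le_iff_of_neg (by positivity) hε (neg_neg_of_pos hξ),
    ← sub_le_iff_le_add', ← div_le_iff₀' (by positivity), div_div_eq_mul_div, mul_div_assoc,
    mul_comm]

theorem gpdTail_neg_log_sub_le_iff {σ ξ ε s x₀ : ℝ} (hσ : 0 < σ) (hξ : 0 < ξ) (hε : 0 < ε)
    (hs : 0 < s) (hy : 0 ≤ -log s - x₀) :
    gpdTail σ ξ (-log s - x₀) ≤ ε ↔ s ≤ exp (σ / ξ * (1 - ε ^ (-ξ)) - x₀) := by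
  rw [gpdTail_le_iff hσ hξ hε hy, ← log_le_iff_le_exp hs]
  constructor <;> intro <;> linarith

noncomputable def transmissionTime (K D W h N₀ P : ℝ) : ℝ :=
  K * D / (W * logb 2 (1 + K * h * P / (W * N₀)))

theorem transmissionTime_le_iff {K D W h N₀ P δ : ℝ} (hK : 0 < K) (hW : 0 < W) (hh : 0 < h)
    (hN : 0 < N₀) (hP : 0 < P) (hδ : 0 < δ) :
    transmissionTime K D W h N₀ P ≤ δ ↔
      W * N₀ / (K * h) * (exp (K * D * log 2 / W * (1 / δ)) - 1) ≤ P := by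
  have hlog2 : 0 < log 2 := log_pos one_lt_two
  have hsnr : 0 < K * h * P / (W * N₀) := by positivity
  have hrate : 0 < logb 2 (1 + K * h * P / (W * N₀)) := logb_pos one_lt_two (by linarith)
  calc transmissionTime K D W h N₀ P ≤ δ
      ↔ K * D ≤ δ * (W * logb 2 (1 + K * h * P / (W * N₀))) :=
        div_le_iff₀ (by positivity)
    _ ↔ K * D * log 2 / W * (1 / δ) ≤ log (1 + K * h * P / (W * N₀)) := by
        rw [logb, mul_one_div, div_div, div_le_iff₀ (by positivity), mul_div_assoc',
          mul_div_assoc', le_div_iff₀ hlog2]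
        ring_nf
    _ ↔ exp (K * D * log 2 / W * (1 / δ)) ≤ 1 + K * h * P / (W * N₀) :=
        le_log_iff_exp_le (by positivity)
    _ ↔ W * N₀ / (K * h) * (exp (K * D * log 2 / W * (1 / δ)) - 1) ≤ P := by
        rw [← sub_le_iff_le_add', ← le_div_iff₀' (by positivity), div_div_eq_mul_div, mul_comm P]

theorem stmt_16_general (K D W h N₀ σ ξ : ℝ) (hK : 0 < K) (hW : 0 < W) (hh : 0 < h)
    (hN : 0 < N₀) (hσ : 0 < σ) (hξ : 0 < ξ) (ε' : ℝ) (hε' : ε' ∈ Set.Ioo (0:ℝ) 1)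
    (x₀ q q_th : ℝ) (hq : q ≤ q_th) :
    ∀ P > 0,
      q + K*D / (W * Real.logb 2 (1 + K*h*P/(W*N₀))) - q_th > 0 →
      -Real.log (q + K*D / (W * Real.logb 2 (1 + K*h*P/(W*N₀))) - q_th) - x₀ ≥ 0 →
      ((1 + (ξ/σ) * (-Real.log (q + K*D / (W * Real.logb 2 (1 + K*h*P/(W*N₀))) - q_th)
          - x₀)) ^ (-1/ξ) ≤ ε'
        ↔ P ≥ (W*N₀/(K*h)) * (Real.exp ((K*D*Real.log 2/W) *
            (1/(q_th - q + Real.exp ((σ/ξ)*(1 - ε' ^ (-ξ)) - x₀)))) - 1)) := by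
  intro P hP hexcess hy
  have hδ : 0 < q_th - q + exp (σ / ξ * (1 - ε' ^ (-ξ)) - x₀) := by
    linarith [exp_pos (σ / ξ * (1 - ε' ^ (-ξ)) - x₀)]
  change gpdTail σ ξ _ ≤ ε' ↔ _
  rw [gpdTail_neg_log_sub_le_iff hσ hξ hε'.1 hexcess hy, ge_iff_le,
    ← transmissionTime_le_iff hK hW hh hN hP hδ, transmissionTime]
  constructor <;> intro <;> linarith

/-- Closed-form minimal transmit-power requirement from the GPD-approximated
URLLC queuing-delay constraint. -/
theorem stmt_16 (K D W h N₀ σ ξ : ℝ) (hK : 0 < K) (hD : 0 < D) (hW : 0 < W) (hh : 0 < h)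
    (hN : 0 < N₀) (hσ : 0 < σ) (hξ : 0 < ξ) (ε' : ℝ) (hε' : ε' ∈ Set.Ioo (0:ℝ) 1)
    (x₀ q q_th : ℝ) (hq : q ≤ q_th) :
    ∀ P > 0,
      q + K*D / (W * Real.logb 2 (1 + K*h*P/(W*N₀))) - q_th > 0 →
      -Real.log (q + K*D / (W * Real.logb 2 (1 + K*h*P/(W*N₀))) - q_th) - x₀ ≥ 0 →
      ((1 + (ξ/σ) * (-Real.log (q + K*D / (W * Real.logb 2 (1 + K*h*P/(W*N₀))) - q_th)
          - x₀)) ^ (-1/ξ) ≤ ε'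
        ↔ P ≥ (W*N₀/(K*h)) * (Real.exp ((K*D*Real.log 2/W) *
            (1/(q_th - q + Real.exp ((σ/ξ)*(1 - ε' ^ (-ξ)) - x₀)))) - 1)) :=
  stmt_16_general K D W h N₀ σ ξ hK hW hh hN hσ hξ ε' hε' x₀ q q_th hq
end
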